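/- The monoid homomorphism from the free monoid on two generators α, β to Γ sending α ↦ a and β ↦ b is injective; consequently Γ has exponential growth: the ball B(n) = {g ∈ Γ : g is a product of at most n elements of {a,b,a⁻¹,b⁻¹}} satisfies #B(n) ≥ 2^n for all n. -/

import Mathlib

namespace PinkGroup

mutual
  /-- forward action of the generator `a` -/
  def aF : List Bool → List Bool
    | [] => []
    | false :: w => true :: bF w
    | true :: w => false :: w
  /-- forward action of the generator `b` -/
  def bF : List Bool → List Bool
    | [] => []
    | false :: w => false :: aF w
    | true :: w => true :: w
end

mutual
  /-- inverse of `aF` -/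
  def aIF : List Bool → List Bool
    | [] => []
    | true :: w => false :: bIF w
    | false :: w => true :: w
  /-- inverse of `bF` -/
  def bIF : List Bool → List Bool
    | [] => []
    | false :: w => false :: aIF w
    | true :: w => true :: w
end

lemma inv_all (w : List Bool) :
    aF (aIF w) = w ∧ bF (bIF w) = w ∧ aIF (aF w) = w ∧ bIF (bF w) = w := by
  induction w with
  | nil => simp [aF, bF, aIF, bIF]
  | cons x w ih =>
    cases x <;>
      simp [aF, bF, aIF, bIF, ih.1, ih.2.1, ih.2.2.1, ih.2.2.2]

/-- The generator `a` of Pink's group: `(1w)^a = 2 w^b`, `(2w)^a = 1w`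
(where the letter `1` is `false` and the letter `2` is `true`). -/
def a : Equiv.Perm (List Bool) :=
  ⟨aF, aIF, fun w => (inv_all w).2.2.1, fun w => (inv_all w).1⟩

/-- The generator `b` of Pink's group: `(1w)^b = 1 w^a`, `(2w)^b = 2w`. -/
def b : Equiv.Perm (List Bool) :=
  ⟨bF, bIF, fun w => (inv_all w).2.2.2, fun w => (inv_all w).2.1⟩

/-- Pink's group `Γ`, the iterated monodromy group of `z^2 - 1`. -/
def Gam : Subgroup (Equiv.Perm (List Bool)) := Subgroup.closure {a, b}

lemma a_mem : a ∈ Gam := Subgroup.subset_closure (by simp)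

lemma b_mem : b ∈ Gam := Subgroup.subset_closure (by simp)


/-- The ball of radius `n` in `Γ` with respect to the generating set `{a, b, a⁻¹, b⁻¹}`. -/
def Ball (n : ℕ) : Set (Equiv.Perm (List Bool)) :=
  {g | g ∈ Gam ∧ ∃ l : List (Equiv.Perm (List Bool)),
    (∀ s ∈ l, s = a ∨ s = b ∨ s = a⁻¹ ∨ s = b⁻¹) ∧ l.length ≤ n ∧ l.prod = g}

end PinkGroup

/-! Write the positive word `u` in `a` (the letter `false`) and `b` (the letter `true`) as a
list of booleans. Since `a = σ(b, 1)` and `b = (a, 1)`, the section of `u` at a first-level vertex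
is again a positive word, obtained by swapping the letters of `u` that act at the vertex `false`.
Each letter is kept in exactly one of the two sections, so the total length is preserved; the
length drops only when both sections are nonempty. Two observations make the induction on length
work: the section at the vertex that `u` sends to `true` never begins with `a`, which separates
`a ⋯` from `b ⋯`; and a nonempty word with trivial image that puts all its letters into the
section at `false` consists of `b`s only, so after one more step the swapped word (all `a`s)
splits its letters between both sections. -/

lemma Set.Finite.setOf_list_prod {M : Type*} [Monoid M] {S : Set M} (hS : S.Finite) (n : ℕ) :
    {g | ∃ l : List M, (∀ s ∈ l, s ∈ S) ∧ l.length ≤ n ∧ l.prod = g}.Finite := by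
  have := hS.to_subtype
  refine ((List.finite_length_le S n).image fun l => (l.map Subtype.val).prod).subset ?_
  rintro _ ⟨l, hlS, hlen, rfl⟩
  lift l to List S using hlS
  exact ⟨l, by simpa using hlen, rfl⟩

namespace PinkGroup

def gen (x : Bool) : Equiv.Perm (List Bool) := bif x then b else a

/-- The rightmost letter acts first. -/
def ofWord (u : List Bool) : Equiv.Perm (List Bool) := (u.map gen).prod

/-- Whether `ofWord u` swaps the two first-level vertices. -/
def rootFlip : List Bool → Bool
  | [] => false
  | x :: u => xor (!x) (rootFlip u)

/-- The section of `ofWord u` at the vertex `i`: the letter `x` of `x :: u` acts at the vertex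
`xor i (rootFlip u)`, and contributes `!x` exactly when this is the vertex `false`. -/
def sectionAt (i : Bool) : List Bool → List Bool
  | [] => []
  | x :: u => if rootFlip u = i then (!x) :: sectionAt i u else sectionAt i u

lemma gen_mem (x : Bool) : gen x ∈ Gam := by
  cases x
  exacts [a_mem, b_mem]

lemma gen_apply_nil (x : Bool) : gen x [] = [] := by
  cases x <;> simp [gen, a, b, aF, bF]

lemma gen_apply_cons (x j : Bool) (w : List Bool) :
    gen x (j :: w) = xor j (!x) :: if j then w else gen (!x) w := by
  cases x <;> cases j <;> simp [gen, a, b, aF, bF]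

lemma ofWord_cons (x : Bool) (u : List Bool) : ofWord (x :: u) = gen x * ofWord u :=
  List.prod_cons

lemma ofWord_apply_nil (u : List Bool) : ofWord u [] = [] := by
  induction u with
  | nil => rfl
  | cons x u ih => rw [ofWord_cons, Equiv.Perm.mul_apply, ih, gen_apply_nil]

lemma ofWord_apply_cons (u : List Bool) (i : Bool) (w : List Bool) :
    ofWord u (i :: w) = xor i (rootFlip u) :: ofWord (sectionAt i u) w := by
  induction u generalizing w with
  | nil => simp [ofWord, rootFlip, sectionAt]
  | cons x u ih =>
    rw [ofWord_cons, Equiv.Perm.mul_apply, ih, gen_apply_cons]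
    cases x <;> cases i <;> cases h : rootFlip u <;> simp [sectionAt, rootFlip, h, ofWord_cons]

section

variable {u v : List Bool}

lemma rootFlip_eq_of_ofWord_eq (h : ofWord u = ofWord v) : rootFlip u = rootFlip v := by
  simpa [ofWord_apply_cons, ofWord_apply_nil] using congrArg (· [false]) h

lemma ofWord_sectionAt_eq_of_ofWord_eq (h : ofWord u = ofWord v) (i : Bool) :
    ofWord (sectionAt i u) = ofWord (sectionAt i v) :=
  Equiv.ext fun w => by
    have := congrArg (· (i :: w)) h
    simp only [ofWord_apply_cons, List.cons.injEq] at this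
    exact this.2

lemma length_sectionAt_add (u : List Bool) :
    (sectionAt false u).length + (sectionAt true u).length = u.length := by
  induction u with
  | nil => rfl
  | cons x u ih => cases h : rootFlip u <;> simp [sectionAt, h] <;> omega

lemma length_sectionAt_le (i : Bool) (u : List Bool) : (sectionAt i u).length ≤ u.length := by
  have := length_sectionAt_add u
  cases i <;> omega

lemma sectionAt_false_ne_nil (hu : u ≠ []) : sectionAt false u ≠ [] := by
  induction u with
  | nil => exact absurd rfl hu
  | cons x u ih =>
    cases h : rootFlip u
    · simp [sectionAt, h]
    · have hu : u ≠ [] := by rintro rfl; simp [rootFlip] at h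
      simpa [sectionAt, h] using ih hu

lemma sectionAt_not_rootFlip_ne_false_cons (u s : List Bool) :
    sectionAt (!rootFlip u) u ≠ false :: s := by
  induction u with
  | nil => simp [sectionAt]
  | cons x u ih => cases x <;> simp [sectionAt, rootFlip, ih]

lemma sectionAt_false_eq_map_not (h : sectionAt true u = []) : sectionAt false u = u.map not := by
  induction u with
  | nil => rfl
  | cons x u ih => cases hr : rootFlip u <;> simp_all [sectionAt]

lemma forall_eq_true_of_sectionAt_true_eq_nil (h : sectionAt true u = [])
    (hr : rootFlip u = false) : ∀ x ∈ u, x = true := by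
  induction u with
  | nil => simp
  | cons x u ih => cases hu : rootFlip u <;> cases x <;> simp_all [sectionAt, rootFlip]

lemma ofWord_sectionAt_eq_one (h : ofWord u = 1) (i : Bool) : ofWord (sectionAt i u) = 1 :=
  ofWord_sectionAt_eq_of_ofWord_eq (v := []) h i

lemma rootFlip_eq_false_of_ofWord_eq_one (h : ofWord u = 1) : rootFlip u = false :=
  rootFlip_eq_of_ofWord_eq (v := []) h

lemma length_sectionAt_false_lt (h : sectionAt true u ≠ []) :
    (sectionAt false u).length < u.length := by
  have := length_sectionAt_add u
  have := List.length_pos_iff.mpr h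
  omega

lemma exists_shorter_of_ofWord_eq_one (h : ofWord u = 1) (hu : u ≠ []) :
    ∃ v, v ≠ [] ∧ v.length < u.length ∧ ofWord v = 1 := by
  by_cases htrue : sectionAt true u = []
  · have hw : ofWord (u.map not) = 1 :=
      sectionAt_false_eq_map_not htrue ▸ ofWord_sectionAt_eq_one h false
    by_cases htrue' : sectionAt true (u.map not) = []
    · have hu_true := forall_eq_true_of_sectionAt_true_eq_nil htrue
        (rootFlip_eq_false_of_ofWord_eq_one h)
      have hw_true := forall_eq_true_of_sectionAt_true_eq_nil htrue'
        (rootFlip_eq_false_of_ofWord_eq_one hw)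
      obtain ⟨x, hx⟩ := List.exists_mem_of_ne_nil u hu
      simpa [hu_true x hx] using hw_true (!x) (List.mem_map_of_mem hx)
    · exact ⟨_, sectionAt_false_ne_nil (by simpa using hu),
        by simpa using length_sectionAt_false_lt htrue', ofWord_sectionAt_eq_one hw false⟩
  · exact ⟨_, sectionAt_false_ne_nil hu, length_sectionAt_false_lt htrue,
      ofWord_sectionAt_eq_one h false⟩

end

theorem eq_nil_of_ofWord_eq_one {u : List Bool} (h : ofWord u = 1) : u = [] := by
  by_contra hu
  obtain ⟨v, hv, hlt, hv₁⟩ := exists_shorter_of_ofWord_eq_one h hu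
  exact hv (eq_nil_of_ofWord_eq_one hv₁)
termination_by u.length

lemma ofWord_sectionAt_eq_of_ofWord_false_cons_eq {u v : List Bool}
    (h : ofWord (false :: u) = ofWord (true :: v)) :
    ofWord (sectionAt (!rootFlip u) u) = ofWord (false :: sectionAt (!rootFlip u) v) := by
  have hr : rootFlip v = !rootFlip u := by simpa [rootFlip] using (rootFlip_eq_of_ofWord_eq h).symm
  have := ofWord_sectionAt_eq_of_ofWord_eq h (!rootFlip u)
  simpa [sectionAt, hr] using this

theorem ofWord_injective : Function.Injective ofWord
  | [], v, h => (eq_nil_of_ofWord_eq_one h.symm).symm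
  | u, [], h => eq_nil_of_ofWord_eq_one h
  | x :: u, y :: v, h => by
    by_cases hxy : x = y
    · subst hxy
      rw [ofWord_cons, ofWord_cons] at h
      rw [ofWord_injective (mul_left_cancel h)]
    · cases x <;> cases y
      · exact absurd rfl hxy
      · exact absurd (ofWord_injective (ofWord_sectionAt_eq_of_ofWord_false_cons_eq h))
          (sectionAt_not_rootFlip_ne_false_cons u _)
      · exact absurd (ofWord_injective (ofWord_sectionAt_eq_of_ofWord_false_cons_eq h.symm))
          (sectionAt_not_rootFlip_ne_false_cons v _)
      · exact absurd rfl hxy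
termination_by u v => u.length + v.length
decreasing_by all_goals grind [length_sectionAt_le]

lemma ofWord_mem_ball {u : List Bool} {n : ℕ} (hu : u.length ≤ n) : ofWord u ∈ Ball n := by
  refine ⟨Subgroup.list_prod_mem _ ?_, u.map gen, ?_, by simpa using hu, rfl⟩
  · simp only [List.mem_map]
    rintro _ ⟨x, -, rfl⟩
    exact gen_mem x
  · simp only [List.mem_map]
    rintro _ ⟨x, -, rfl⟩
    cases x <;> simp [gen]

lemma finite_ball (n : ℕ) : (Ball n).Finite :=
  (Set.Finite.setOf_list_prod (Set.toFinite {a, b, a⁻¹, b⁻¹}) n).subset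
    fun _ ⟨_, l, hl, hlen, hprod⟩ => ⟨l, by simpa using hl, hlen, hprod⟩

/-- The monoid homomorphism from the free monoid on two generators to `Γ`
sending the generators to `a` and `b` is injective; consequently `Γ` has exponential
growth: `#B(n) ≥ 2^n`. -/
theorem Gam_free_submonoid_and_exponential_growth :
    Function.Injective ⇑(FreeMonoid.lift (fun x : Bool => bif x then b else a)) ∧
    ∀ n : ℕ, 2 ^ n ≤ (Ball n).ncard := by
  refine ⟨fun u v h => FreeMonoid.toList.injective <| ofWord_injective <|
    (FreeMonoid.lift_apply _ u).symm.trans (h.trans (FreeMonoid.lift_apply _ v)), fun n => ?_⟩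
  have hinj : Function.Injective fun f : Fin n → Bool => ofWord (List.ofFn f) :=
    fun f g h => List.ofFn_injective (ofWord_injective h)
  calc 2 ^ n = (Set.range fun f : Fin n → Bool => ofWord (List.ofFn f)).ncard := by
        simp [Set.ncard_range_of_injective hinj]
    _ ≤ (Ball n).ncard :=
        Set.ncard_le_ncard (Set.range_subset_iff.mpr fun f => ofWord_mem_ball (by simp))
          (finite_ball n)

end PinkGroup
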